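/- The functions x(t) = t, y(t) = √(b² + t²/4), u(t) = 3t/(4b²) + 4t/(4b² + t²), with λ = −9/(4b²), satisfy the Sp(2)-invariant soliton equations: with τ₂ := (y²)' − x and τ₁ := (x²)' − 2x + x³/y², one has τ₁/x² + 2τ₂/y² = 0, (τ₁ − ux²)' = λx², (τ₂ − uy²)' = λy², and τ₁ + 2τ₂ = u(x² + 2y²) + 2λxy². -/

import Mathlib

/-!
Everything is explicit: `τ₂ = −t/2`, `τ₁ = t³/y²`, and `u = t (3/(4b²) + 1/y²)` because
`4b² + t² = 4y²`. Hence `τ₁ − u x²` and `τ₂ − u y²` are odd cubics in `t`, whose derivatives are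
`λ x²` and `λ y²`, and the remaining identities are rational identities in `t` and `b`.
-/

/-- `x(t) = t`. -/
noncomputable def xF : ℝ → ℝ := fun t => t

/-- `y(t)² = b² + t²/4`. -/
noncomputable def y2F (b : ℝ) : ℝ → ℝ := fun t => b ^ 2 + t ^ 2 / 4

/-- `u(t) = 3t/(4b²) + 4t/(4b² + t²)`. -/
noncomputable def uF (b : ℝ) : ℝ → ℝ :=
  fun t => 3 * t / (4 * b ^ 2) + 4 * t / (4 * b ^ 2 + t ^ 2)

/-- `τ₂ := (y²)' − x`. -/
noncomputable def tau2F (b : ℝ) : ℝ → ℝ := fun t => deriv (y2F b) t - xF t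

/-- `τ₁ := (x²)' − 2x + x³/y²`. -/
noncomputable def tau1F (b : ℝ) : ℝ → ℝ :=
  fun t => deriv (fun s => xF s ^ 2) t - 2 * xF t + xF t ^ 3 / y2F b t

theorem hasDerivAt_xF (t : ℝ) : HasDerivAt xF 1 t := hasDerivAt_id t

theorem hasDerivAt_y2F (b t : ℝ) : HasDerivAt (y2F b) (t / 2) t := by
  have := (hasDerivAt_const t (b ^ 2)).add ((hasDerivAt_pow 2 t).div_const 4)
  exact this.congr_deriv (by ring)

theorem y2F_pos {b : ℝ} (hb : b ≠ 0) (t : ℝ) : 0 < y2F b t := by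
  unfold y2F; positivity

theorem tau2F_eq (b t : ℝ) : tau2F b t = -(xF t / 2) := by
  rw [tau2F, (hasDerivAt_y2F b t).deriv, xF]; ring

theorem tau1F_eq (b t : ℝ) : tau1F b t = xF t ^ 3 / y2F b t := by
  have hsq : HasDerivAt (fun s => xF s ^ 2) (2 * xF t) t :=
    (hasDerivAt_pow 2 t).congr_deriv (by rw [xF]; ring)
  rw [tau1F, hsq.deriv]
  ring

theorem tau1F_div_sq (b t : ℝ) : tau1F b t / xF t ^ 2 = xF t / y2F b t := by
  rw [tau1F_eq]
  rcases eq_or_ne (xF t) 0 with h | h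
  · simp [h]
  · field_simp

theorem uF_eq {b : ℝ} (hb : b ≠ 0) (t : ℝ) :
    uF b t = xF t * (3 / (4 * b ^ 2) + 1 / y2F b t) := by
  have := (y2F_pos hb t).ne'
  unfold uF xF y2F at *
  field_simp

theorem tau1F_sub_uF_mul {b : ℝ} (hb : b ≠ 0) :
    (fun s => tau1F b s - uF b s * xF s ^ 2) = fun s => -3 / (4 * b ^ 2) * xF s ^ 3 := by
  funext s
  have := (y2F_pos hb s).ne'
  rw [tau1F_eq, uF_eq hb]
  field_simp
  ring

theorem tau2F_sub_uF_mul {b : ℝ} (hb : b ≠ 0) :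
    (fun s => tau2F b s - uF b s * y2F b s)
      = fun s => -9 / 4 * xF s - 3 / (16 * b ^ 2) * xF s ^ 3 := by
  funext s
  have := (y2F_pos hb s).ne'
  rw [tau2F_eq, uF_eq hb]
  unfold xF y2F at *
  field_simp
  ring

theorem stmt12 (b : ℝ) (hb : 0 < b) :
    (∀ t : ℝ, HasDerivAt (fun s => xF s * y2F b s) (xF t ^ 2 / 2 + y2F b t) t) ∧
    (∀ t : ℝ, tau1F b t / xF t ^ 2 + 2 * tau2F b t / y2F b t = 0) ∧
    (∀ t : ℝ, HasDerivAt (fun s => tau1F b s - uF b s * xF s ^ 2)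
      (-9 / (4 * b ^ 2) * xF t ^ 2) t) ∧
    (∀ t : ℝ, HasDerivAt (fun s => tau2F b s - uF b s * y2F b s)
      (-9 / (4 * b ^ 2) * y2F b t) t) ∧
    (∀ t : ℝ, tau1F b t + 2 * tau2F b t
      = uF b t * (xF t ^ 2 + 2 * y2F b t)
        + 2 * (-9 / (4 * b ^ 2)) * xF t * y2F b t) := by
  have hb0 : b ≠ 0 := hb.ne'
  refine ⟨fun t => ?_, fun t => ?_, fun t => ?_, fun t => ?_, fun t => ?_⟩
  · exact ((hasDerivAt_xF t).mul (hasDerivAt_y2F b t)).congr_deriv (by rw [xF]; ring)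
  · rw [tau1F_div_sq, tau2F_eq]; ring
  · rw [tau1F_sub_uF_mul hb0]
    exact (((hasDerivAt_xF t).pow 3).const_mul _).congr_deriv (by ring)
  · rw [tau2F_sub_uF_mul hb0]
    exact (((hasDerivAt_xF t).const_mul _).sub (((hasDerivAt_xF t).pow 3).const_mul _)).congr_deriv
      (by unfold y2F xF; field_simp; ring)
  · have := (y2F_pos hb0 t).ne'
    rw [tau1F_eq, tau2F_eq, uF_eq hb0]
    unfold xF y2F at *
    field_simp
    ring
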